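/- Let Ω ⊂ ℝ^d be a bounded convex open set of diameter R, and let (u,w) be continuous on closure(Ω) with w = 0 on ∂Ω, satisfying the two-point condition (1/2)|u(y) − u(x)|² + ⟨w(y) − w(x), y − x⟩ ≤ |x − y|² for all x,y ∈ closure(Ω). Then |w(x)| ≤ R for every x ∈ closure(Ω). -/

import Mathlib

/-!
The ray from `x` in the direction `-w x` starts in `closure Ω` and, `Ω` being bounded, leaves it;
being connected, it meets `frontier Ω` at some `y = x - t • w x` with `t ≥ 0`, where `w y = 0`.
The two-point condition at `(x, y)` then reads `t ‖w x‖² ≤ t² ‖w x‖²`, so `t ≥ 1` and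
`‖w x‖ ≤ ‖y - x‖ ≤ diam Ω`.
-/

open Bornology Metric Set

theorem exists_nonneg_add_smul_mem_frontier {E : Type*} [NormedAddCommGroup E] [NormedSpace ℝ E]
    {s : Set E} (hs : IsBounded s) {x : E} (hx : x ∈ closure s) {v : E} (hv : v ≠ 0) :
    ∃ t : ℝ, 0 ≤ t ∧ x + t • v ∈ frontier s := by
  by_cases hxi : x ∈ interior s
  swap
  · exact ⟨0, le_rfl, by simpa using ⟨hx, hxi⟩⟩
  by_contra! hnot
  obtain ⟨r, hr⟩ := hs.closure.subset_closedBall x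
  have hfar : x + ((|r| + 1) / ‖v‖) • v ∉ closure s := fun hmem => by
    have := hr hmem
    rw [mem_closedBall, dist_eq_norm, add_sub_cancel_left, norm_smul, Real.norm_eq_abs,
      abs_of_nonneg (by positivity), div_mul_cancel₀ _ (norm_ne_zero_iff.mpr hv)] at this
    linarith [le_abs_self r]
  have hray : IsPreconnected ((fun t : ℝ => x + t • v) '' Ici 0) :=
    isPreconnected_Ici.image _ (by fun_prop)
  have hcover : (fun t : ℝ => x + t • v) '' Ici 0 ⊆ interior s ∪ (closure s)ᶜ := by
    rintro _ ⟨t, ht, rfl⟩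
    have := hnot t ht
    rw [frontier, mem_sdiff, not_and_not_right] at this
    tauto
  obtain ⟨z, -, hz_int, hz_ext⟩ := hray _ _ isOpen_interior isClosed_closure.isOpen_compl hcover
    ⟨x, ⟨0, self_mem_Ici, by simp⟩, hxi⟩ ⟨_, ⟨_, mem_Ici.mpr (by positivity), rfl⟩, hfar⟩
  exact hz_ext (interior_subset_closure hz_int)

theorem norm_le_norm_sub_of_inner_le {F : Type*} [NormedAddCommGroup F] [InnerProductSpace ℝ F]
    {w : F → F} {x y : F} {t : ℝ} (ht : 0 ≤ t) (hxy : y - x = t • -w x) (hwy : w y = 0)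
    (h : inner ℝ (w y - w x) (y - x) ≤ ‖y - x‖ ^ 2) :
    ‖w x‖ ≤ ‖y - x‖ := by
  rcases ht.eq_or_lt with rfl | htpos
  · rw [zero_smul, sub_eq_zero] at hxy
    simp [← hxy, hwy]
  rw [hxy] at h ⊢
  rw [hwy, zero_sub, real_inner_smul_right, real_inner_self_eq_norm_sq] at h
  rw [norm_smul, norm_neg, Real.norm_eq_abs, abs_of_pos htpos] at h ⊢
  rcases eq_or_ne (w x) 0 with h0 | h0
  · simp [h0]
  have h1 : 1 ≤ t :=
    le_of_mul_le_mul_left (by linarith) (by positivity : 0 < t * ‖w x‖ ^ 2)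
  exact le_mul_of_one_le_left (norm_nonneg _) h1

theorem stmt7 {d : ℕ} (Ω : Set (EuclideanSpace ℝ (Fin d)))
    (hΩb : Bornology.IsBounded Ω)
    (u : EuclideanSpace ℝ (Fin d) → ℝ) (w : EuclideanSpace ℝ (Fin d) → EuclideanSpace ℝ (Fin d))
    (hw0 : ∀ x ∈ frontier Ω, w x = 0)
    (h2p : ∀ x ∈ closure Ω, ∀ y ∈ closure Ω,
      (1/2) * (u y - u x)^2 + (inner ℝ (w y - w x) (y - x) : ℝ) ≤ ‖y - x‖^2) :
    ∀ x ∈ closure Ω, ‖w x‖ ≤ Metric.diam Ω := by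
  intro x hx
  rcases eq_or_ne (w x) 0 with h0 | h0
  · simpa [h0] using diam_nonneg
  obtain ⟨t, ht, hy⟩ := exists_nonneg_add_smul_mem_frontier hΩb hx (neg_ne_zero.mpr h0)
  set y := x + t • -w x
  have hyΩ : y ∈ closure Ω := frontier_subset_closure hy
  have hinner : inner ℝ (w y - w x) (y - x) ≤ ‖y - x‖ ^ 2 := by
    linarith [h2p x hx y hyΩ, sq_nonneg (u y - u x)]
  calc ‖w x‖ ≤ ‖y - x‖ :=
        norm_le_norm_sub_of_inner_le ht (add_sub_cancel_left _ _) (hw0 y hy) hinner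
    _ = dist y x := (dist_eq_norm y x).symm
    _ ≤ diam (closure Ω) := dist_le_diam_of_mem hΩb.closure hyΩ hx
    _ = diam Ω := diam_closure Ω
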